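/- Let X be a real-valued square-integrable random variable with mean μ and variance ν. Then for all real numbers β and θ, E[ exp( ψ( β·(X − θ) ) ) ] ≤ exp( β·(μ − θ) + (β²/2)·(ν + (μ − θ)²) ). -/

import Mathlib

/-! Since `exp ∘ ψ` is the quadratic `1 + y + y²/2`, the exponential moment of `ψ(β(X − θ))` is
exactly `1 + m + s/2`, where `m` and `s` are the first and second moments of `β(X − θ)`;
these are `β(μ − θ)` and `β²(ν + (μ − θ)²)`, and `1 + t ≤ exp t` finishes. -/

open MeasureTheory ProbabilityTheory

noncomputable def psi (x : ℝ) : ℝ := Real.log (1 + x + x ^ 2 / 2)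

lemma one_add_add_sq_div_two_pos (x : ℝ) : 0 < 1 + x + x ^ 2 / 2 := by
  nlinarith [sq_nonneg (x + 1)]

lemma exp_psi (x : ℝ) : Real.exp (psi x) = 1 + x + x ^ 2 / 2 :=
  Real.exp_log (one_add_add_sq_div_two_pos x)

section Moments

variable {Ω : Type*} [MeasurableSpace Ω] {P : Measure Ω}

lemma integral_exp_psi [IsProbabilityMeasure P] {Y : Ω → ℝ} (hY : MemLp Y 2 P) :
    ∫ ω, Real.exp (psi (Y ω)) ∂P = 1 + ∫ ω, Y ω ∂P + (∫ ω, Y ω ^ 2 ∂P) / 2 := by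
  have hY₁ : Integrable Y P := hY.integrable one_le_two
  have hY₀ : Integrable (fun ω => 1 + Y ω) P := (integrable_const 1).add hY₁
  simp_rw [exp_psi]
  rw [integral_add hY₀ (hY.integrable_sq.div_const 2), integral_add (integrable_const 1) hY₁,
    integral_div]
  simp

lemma integral_sq_eq_variance_add_sq [IsProbabilityMeasure P] {Y : Ω → ℝ} (hY : MemLp Y 2 P) :
    ∫ ω, Y ω ^ 2 ∂P = variance Y P + (∫ ω, Y ω ∂P) ^ 2 := by
  rw [variance_eq_sub hY]
  simp [Pi.pow_apply]

end Moments

/-- Upper exponential-moment bound: for a square-integrable real random variable `X`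
with mean `μ` and variance `ν`, and any reals `β, θ`,
`E[exp(ψ(β(X − θ)))] ≤ exp(β(μ − θ) + (β²/2)(ν + (μ − θ)²))`. -/
theorem catoni_exp_moment_upper
    {Ω : Type*} [MeasurableSpace Ω] (P : Measure Ω) [IsProbabilityMeasure P]
    (X : Ω → ℝ) (μ ν : ℝ)
    (hX : MemLp X 2 P)
    (hmean : ∫ ω, X ω ∂P = μ)
    (hvar : variance X P = ν)
    (β θ : ℝ) :
    ∫ ω, Real.exp (psi (β * (X ω - θ))) ∂P ≤
      Real.exp (β * (μ - θ) + β ^ 2 / 2 * (ν + (μ - θ) ^ 2)) := by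
  have hY : MemLp (fun ω => β * (X ω - θ)) 2 P := (hX.sub (memLp_const θ)).const_mul β
  have hmeanY : ∫ ω, β * (X ω - θ) ∂P = β * (μ - θ) := by
    rw [integral_const_mul, integral_sub (hX.integrable one_le_two) (integrable_const θ), hmean]
    simp
  have hvarY : variance (fun ω => β * (X ω - θ)) P = β ^ 2 * ν := by
    rw [variance_const_mul, variance_sub_const hX.aestronglyMeasurable, hvar]
  rw [integral_exp_psi hY, integral_sq_eq_variance_add_sq hY, hmeanY, hvarY]
  calc 1 + β * (μ - θ) + (β ^ 2 * ν + (β * (μ - θ)) ^ 2) / 2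
      = (β * (μ - θ) + β ^ 2 / 2 * (ν + (μ - θ) ^ 2)) + 1 := by ring
    _ ≤ Real.exp (β * (μ - θ) + β ^ 2 / 2 * (ν + (μ - θ) ^ 2)) := Real.add_one_le_exp _
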